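/- Let Λ ⊆ ℝ^d be compact with f(Λ) = Λ, and let (E, F) be maps assigning to each x ∈ Λ linear subspaces with ℝ^d = E(x) ⊕ F(x), Df-invariant (Df_x(E(x)) = E(f(x)), Df_x(F(x)) = F(f(x))), and satisfying the domination inequality with constants C > 0, λ ∈ (0,1) (continuity not assumed). Then the angle between E and F is bounded away from zero: there exists c > 0 such that for every x ∈ Λ and all nonzero u ∈ E(x), v ∈ F(x), ‖u + v‖ ≥ c·(‖u‖ + ‖v‖). -/

import Mathlib

open Set

noncomputable section

abbrev Euc (d : ℕ) := EuclideanSpace ℝ (Fin d)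

/-- f is a C¹ diffeomorphism of ℝ^d. -/
def IsC1Diffeo {d : ℕ} (f : Euc d → Euc d) : Prop :=
  Function.Bijective f ∧ ContDiff ℝ 1 f ∧
    ∃ g : Euc d → Euc d, ContDiff ℝ 1 g ∧ Function.LeftInverse g f ∧ Function.RightInverse g f

/-- The orthogonal projection onto V, as an endomorphism. -/
def projSub {d : ℕ} (V : Submodule ℝ (Euc d)) : Euc d →L[ℝ] Euc d :=
  V.subtypeL.comp (Submodule.orthogonalProjectionOnto V)

/-- The domination inequality. -/
def DomIneq {d : ℕ} (f : Euc d → Euc d) (Λ : Set (Euc d))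
    (E F : Euc d → Submodule ℝ (Euc d)) (C lam : ℝ) : Prop :=
  ∀ x ∈ Λ, ∀ n : ℕ, ∀ u ∈ E x, u ≠ 0 → ∀ v ∈ F x, v ≠ 0 →
    ‖fderiv ℝ (f^[n]) x u‖ / ‖u‖ ≤ C * lam ^ n * (‖fderiv ℝ (f^[n]) x v‖ / ‖v‖)

/-- Dominated splitting on Λ with constants C, lam. -/
def IsDomSplitting {d : ℕ} (f : Euc d → Euc d) (Λ : Set (Euc d))
    (E F : Euc d → Submodule ℝ (Euc d)) (C lam : ℝ) : Prop :=
  (∀ x ∈ Λ, IsCompl (E x) (F x)) ∧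
  (∀ x ∈ Λ, (E x).map (fderiv ℝ f x : Euc d →ₗ[ℝ] Euc d) = E (f x)) ∧
  (∀ x ∈ Λ, (F x).map (fderiv ℝ f x : Euc d →ₗ[ℝ] Euc d) = F (f x)) ∧
  ContinuousOn (fun x => projSub (E x)) Λ ∧
  ContinuousOn (fun x => projSub (F x)) Λ ∧
  DomIneq f Λ E F C lam

/-!
Fix `n` with `C λⁿ ≤ 1/4`. On the compact set `Λ` the derivative `A = D(fⁿ)ₓ` is bounded above,
and also below, since `D(f⁻¹)ⁿ` is bounded on the compact set `fⁿ(Λ)`. If `A` contracts `u` four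
times more strongly than `v` and `‖u‖ ≤ 2‖v‖`, then `‖A u‖ ≤ ‖A v‖ / 2`, so `A (u + v)`, hence
`u + v`, is comparable to `v`; if `‖u‖ > 2‖v‖`, then `‖u + v‖ ≥ ‖u‖ - ‖v‖ ≥ (‖u‖ + ‖v‖) / 3`.
-/

variable {𝕜 : Type*} [NontriviallyNormedField 𝕜]
  {X : Type*} [NormedAddCommGroup X] [NormedSpace 𝕜 X]
  {Y : Type*} [NormedAddCommGroup Y] [NormedSpace 𝕜 Y]

theorem ContDiff.iterate {f : X → X} {n : WithTop ℕ∞} (hf : ContDiff 𝕜 n f) (k : ℕ) :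
    ContDiff 𝕜 n f^[k] := by
  induction k with
  | zero => exact contDiff_id
  | succ k ih => rw [Function.iterate_succ']; exact hf.comp ih

theorem fderiv_apply_fderiv_of_leftInverse {f : X → Y} {g : Y → X} {x : X}
    (hf : DifferentiableAt 𝕜 f x) (hg : DifferentiableAt 𝕜 g (f x))
    (hgf : Function.LeftInverse g f) (w : X) :
    fderiv 𝕜 g (f x) (fderiv 𝕜 f x w) = w := by
  have hcomp := fderiv_comp x hg hf
  rw [hgf.comp_eq_id, fderiv_id] at hcomp
  exact (congrArg (fun L : X →L[𝕜] X => L w) hcomp).symm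

theorem IsCompact.exists_pos_bound_of_continuousOn {α : Type*} [TopologicalSpace α]
    {s : Set α} (hs : IsCompact s) {f : α → Y} (hf : ContinuousOn f s) :
    ∃ C > 0, ∀ x ∈ s, ‖f x‖ ≤ C := by
  obtain ⟨C, hC₀, hC⟩ := (hs.image_of_continuousOn hf).isBounded.exists_pos_norm_le
  exact ⟨C, hC₀, fun x hx => hC _ (mem_image_of_mem f hx)⟩

theorem IsCompact.exists_pos_norm_le_mul_norm_fderiv {s : Set X} (hs : IsCompact s)
    {f : X → Y} {g : Y → X} (hf : Differentiable 𝕜 f) (hg : ContDiff 𝕜 1 g)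
    (hgf : Function.LeftInverse g f) :
    ∃ K > 0, ∀ x ∈ s, ∀ w, ‖w‖ ≤ K * ‖fderiv 𝕜 f x w‖ := by
  obtain ⟨K, hK₀, hK⟩ := (hs.image hf.continuous).exists_pos_bound_of_continuousOn
    (hg.continuous_fderiv one_ne_zero).continuousOn
  refine ⟨K, hK₀, fun x hx w => ?_⟩
  calc ‖w‖ = ‖fderiv 𝕜 g (f x) (fderiv 𝕜 f x w)‖ := by
        rw [fderiv_apply_fderiv_of_leftInverse (hf x) (hg.differentiable one_ne_zero _) hgf]
    _ ≤ ‖fderiv 𝕜 g (f x)‖ * ‖fderiv 𝕜 f x w‖ := ContinuousLinearMap.le_opNorm _ _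
    _ ≤ K * ‖fderiv 𝕜 f x w‖ := by gcongr; exact hK _ (mem_image_of_mem f hx)

theorem exists_mul_pow_le_of_lt_one {C lam ε : ℝ} (hC : 0 < C) (hlam : lam < 1) (hε : 0 < ε) :
    ∃ n : ℕ, C * lam ^ n ≤ ε := by
  obtain ⟨n, hn⟩ := exists_pow_lt_of_lt_one (div_pos hε hC) hlam
  exact ⟨n, by rw [lt_div_iff₀' hC] at hn; exact hn.le⟩

theorem norm_add_norm_le_of_dominated {A : X →L[𝕜] Y} {K : ℝ} (hK : ∀ w, ‖w‖ ≤ K * ‖A w‖)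
    {u v : X} (hu : u ≠ 0) (hv : v ≠ 0) (hdom : ‖A u‖ / ‖u‖ ≤ 1 / 4 * (‖A v‖ / ‖v‖)) :
    ‖u‖ + ‖v‖ ≤ (3 + 4 * K * ‖A‖) * ‖u + v‖ := by
  have hu₀ : 0 < ‖u‖ := norm_pos_iff.mpr hu
  have hv₀ : 0 < ‖v‖ := norm_pos_iff.mpr hv
  have hK₀ : 0 ≤ K := by
    by_contra! hK₀
    nlinarith [hK v, norm_nonneg (A v)]
  have hAuv : 4 * ‖A u‖ * ‖v‖ ≤ ‖u‖ * ‖A v‖ := by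
    rw [div_le_iff₀ hu₀] at hdom
    calc 4 * ‖A u‖ * ‖v‖ ≤ 4 * (1 / 4 * (‖A v‖ / ‖v‖) * ‖u‖) * ‖v‖ := by gcongr
      _ = ‖u‖ * ‖A v‖ := by field_simp
  have hAv : ‖A v‖ ≤ ‖A u‖ + ‖A‖ * ‖u + v‖ := by
    calc ‖A v‖ ≤ ‖A (u + v)‖ + ‖A u‖ := by simpa using norm_le_add_norm_add' (A u) (A v)
      _ ≤ ‖A‖ * ‖u + v‖ + ‖A u‖ := by gcongr; exact A.le_opNorm _
      _ = ‖A u‖ + ‖A‖ * ‖u + v‖ := add_comm _ _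
  have hKA₀ : 0 ≤ K * ‖A‖ * ‖u + v‖ := by positivity
  have htri := norm_le_add_norm_add u v
  rcases le_or_gt ‖u‖ (2 * ‖v‖) with h | h
  · have hAu : 2 * ‖A u‖ ≤ ‖A v‖ := by
      refine le_of_mul_le_mul_right ?_ hv₀
      nlinarith [norm_nonneg (A v)]
    have hv_le : ‖v‖ ≤ 2 * K * ‖A‖ * ‖u + v‖ := by
      nlinarith [hK v]
    linarith [norm_nonneg (u + v)]
  · linarith

theorem dominated_splitting_angle_bounded_general
    {d : ℕ} (f : Euc d → Euc d) (hf : IsC1Diffeo f)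
    (Λ : Set (Euc d)) (hΛ : IsCompact Λ)
    (E F : Euc d → Submodule ℝ (Euc d))
    (C lam : ℝ) (hC : 0 < C) (hlam1 : lam < 1)
    (hdom : DomIneq f Λ E F C lam) :
    ∃ c > (0:ℝ), ∀ x ∈ Λ, ∀ u ∈ E x, u ≠ 0 → ∀ v ∈ F x, v ≠ 0 →
      ‖u + v‖ ≥ c * (‖u‖ + ‖v‖) := by
  obtain ⟨-, hf₁, g, hg₁, hgf, -⟩ := hf
  obtain ⟨n, hn⟩ := exists_mul_pow_le_of_lt_one hC hlam1 (by norm_num : (0 : ℝ) < 1 / 4)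
  obtain ⟨M, hM₀, hM⟩ := hΛ.exists_pos_bound_of_continuousOn
    ((hf₁.iterate n).continuous_fderiv one_ne_zero).continuousOn
  obtain ⟨K, hK₀, hK⟩ := hΛ.exists_pos_norm_le_mul_norm_fderiv
    ((hf₁.iterate n).differentiable one_ne_zero) (hg₁.iterate n) (hgf.iterate n)
  refine ⟨1 / (3 + 4 * K * M), by positivity, fun x hx u hu hu₀ v hv hv₀ => ?_⟩
  set A := fderiv ℝ f^[n] x
  have hdom' : ‖A u‖ / ‖u‖ ≤ 1 / 4 * (‖A v‖ / ‖v‖) :=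
    (hdom x hx n u hu hu₀ v hv hv₀).trans (by gcongr)
  rw [ge_iff_le, one_div_mul_eq_div, div_le_iff₀' (by positivity)]
  calc ‖u‖ + ‖v‖ ≤ (3 + 4 * K * ‖A‖) * ‖u + v‖ :=
        norm_add_norm_le_of_dominated (hK x hx) hu₀ hv₀ hdom'
    _ ≤ (3 + 4 * K * M) * ‖u + v‖ := by gcongr; exact hM x hx

/-- For a dominated splitting (continuity not assumed) on a compact invariant
set, the angle between the two subbundles is bounded away from zero. -/
theorem dominated_splitting_angle_bounded
    {d : ℕ} (hd : 1 ≤ d) (f : Euc d → Euc d) (hf : IsC1Diffeo f)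
    (Λ : Set (Euc d)) (hΛ : IsCompact Λ) (hinv : f '' Λ = Λ)
    (E F : Euc d → Submodule ℝ (Euc d))
    (hcompl : ∀ x ∈ Λ, IsCompl (E x) (F x))
    (hEinv : ∀ x ∈ Λ, (E x).map (fderiv ℝ f x : Euc d →ₗ[ℝ] Euc d) = E (f x))
    (hFinv : ∀ x ∈ Λ, (F x).map (fderiv ℝ f x : Euc d →ₗ[ℝ] Euc d) = F (f x))
    (C lam : ℝ) (hC : 0 < C) (hlam0 : 0 < lam) (hlam1 : lam < 1)
    (hdom : DomIneq f Λ E F C lam) :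
    ∃ c > (0:ℝ), ∀ x ∈ Λ, ∀ u ∈ E x, u ≠ 0 → ∀ v ∈ F x, v ≠ 0 →
      ‖u + v‖ ≥ c * (‖u‖ + ‖v‖) :=
  dominated_splitting_angle_bounded_general f hf Λ hΛ E F C lam hC hlam1 hdom
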